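/- R^cl(ω+2, 3) ≤ R^cl(ω+1, 3) + P^cl(ω+2)₂; i.e., since R^cl(ω+1,3) = ω²+1 and P^cl(ω+2)₂ = ω²+ω+2, the ordinal ω²·2+ω+2 satisfies ω²·2+ω+2 →_cl (ω+2, 3)². -/

import Mathlib

open Ordinal Set

noncomputable section

instance : TopologicalSpace Ordinal := Preorder.topology Ordinal
instance : OrderTopology Ordinal := ⟨rfl⟩

/-- `X` is order-isomorphic to the ordinal `a`. -/
def IsOrderCopy (X : Set Ordinal) (a : Ordinal) : Prop :=
  Nonempty (X ≃o (Iio a))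

/-- `X` is order-isomorphic to the ordinal `a` and closed in its supremum. -/
def IsClosedCopy (X : Set Ordinal) (a : Ordinal) : Prop :=
  IsOrderCopy X a ∧ ∀ S ⊆ X, S.Nonempty → sSup S < sSup X → sSup S ∈ X

/-- `X` is homeomorphic to the ordinal `a` with its order topology. -/
def IsTopCopy (X : Set Ordinal) (a : Ordinal) : Prop :=
  Nonempty (X ≃ₜ (Iio a))

/-- `X` is homogeneous for color `b` (red = `true`, blue = `false`):
every pair from `X` gets color `b`. -/
def Homog (c : Ordinal → Ordinal → Bool) (b : Bool) (X : Set Ordinal) : Prop :=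
  ∀ x ∈ X, ∀ y ∈ X, x < y → c x y = b

/-- There is a blue-homogeneous set of `m` points inside `β`. -/
def BlueSet (c : Ordinal → Ordinal → Bool) (β : Ordinal) (m : ℕ) : Prop :=
  ∃ H : Finset Ordinal, (H : Set Ordinal) ⊆ Iio β ∧ H.card = m ∧ Homog c false (H : Set Ordinal)

/-- The closed partition relation `β →_cl (a, m)²`. -/
def ToClosed2 (β a : Ordinal) (m : ℕ) : Prop :=
  ∀ c : Ordinal → Ordinal → Bool,
    (∃ X ⊆ Iio β, IsClosedCopy X a ∧ Homog c true X) ∨ BlueSet c β m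

/-- The topological partition relation `β →_top (a, m)²`. -/
def ToTop2 (β a : Ordinal) (m : ℕ) : Prop :=
  ∀ c : Ordinal → Ordinal → Bool,
    (∃ X ⊆ Iio β, IsTopCopy X a ∧ Homog c true X) ∨ BlueSet c β m

/-- The classical partition relation `β → (a, m)²`. -/
def ToPlain2 (β a : Ordinal) (m : ℕ) : Prop :=
  ∀ c : Ordinal → Ordinal → Bool,
    (∃ X ⊆ Iio β, IsOrderCopy X a ∧ Homog c true X) ∨ BlueSet c β m

/-- The closed pigeonhole relation `β →_cl (a)¹_k`. -/
def ToClosed1 (β a : Ordinal) (k : ℕ) : Prop :=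
  ∀ c : Ordinal → Fin k, ∃ i, ∃ X ⊆ Iio β, (∀ x ∈ X, c x = i) ∧ IsClosedCopy X a

/-- The topological pigeonhole relation `β →_top (a)¹_k`. -/
def ToTop1 (β a : Ordinal) (k : ℕ) : Prop :=
  ∀ c : Ordinal → Fin k, ∃ i, ∃ X ⊆ Iio β, (∀ x ∈ X, c x = i) ∧ IsTopCopy X a

/-- The classical pigeonhole relation `β → (a)¹_k`. -/
def ToPlain1 (β a : Ordinal) (k : ℕ) : Prop :=
  ∀ c : Ordinal → Fin k, ∃ i, ∃ X ⊆ Iio β, (∀ x ∈ X, c x = i) ∧ IsOrderCopy X a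

/-- The closed ordinal Ramsey number `R^cl(a, m)`. -/
def Rcl (a : Ordinal) (m : ℕ) : Ordinal := sInf {β | ToClosed2 β a m}

/-- The topological ordinal Ramsey number `R^top(a, m)`. -/
def Rtop (a : Ordinal) (m : ℕ) : Ordinal := sInf {β | ToTop2 β a m}

/-- The classical pigeonhole number `P(a)_k`. -/
def Pplain (a : Ordinal) (k : ℕ) : Ordinal := sInf {β | ToPlain1 β a k}

/-- The closed pigeonhole number `P^cl(a)_k`. -/
def PclK (a : Ordinal) (k : ℕ) : Ordinal := sInf {β | ToClosed1 β a k}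

/-!
Split `ω²·2 + ω + 2 = (ω² + 1) + (ω² + ω + 2)` and fix a colouring with no blue triangle.
By `ω² + 1 →_cl (ω + 1, 3)²` the first part contains a red closed copy `{u₀ < u₁ < ⋯} ∪ {l}` of
`ω + 1`. A point `z` of the second part that is red to `l` is red to only finitely many `uₖ`,
since otherwise those `uₖ` together with `l` and `z` form a red closed copy of `ω + 2`. Hence the
points of the second part blue to `l`, and those red to `l`, both span red cliques: a blue edge
in the first class closes a blue triangle with `l`, and two points of the second class have a
common blue neighbour `uₖ`. The pigeonhole relation `ω² + ω + 2 →_cl (ω + 2)¹₂`, applied to this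
partition of the second part, yields a red closed copy of `ω + 2`.

Both auxiliary relations are proved directly. For the first, either the points red to `ω²` are
cofinal in `ω²`, and then an `ω`-sequence of them has an infinite red subsequence (Ramsey's
theorem, there being no blue triangle) which ends at `ω²`; or some interval `[γ, γ + ω]` is blue
to `ω²`, hence red. For the second, if the colour class of `ω²` is cofinal in `ω²` and meets
`(ω², ω² + ω + 2)`, it contains a copy `{sₖ} ∪ {ω², t}`; otherwise the other class contains an
interval `[γ, γ + ω + 1]`.
-/

universe v w

theorem omega0_opow_two : ω ^ (2 : Ordinal) = ω * ω := by
  rw [show (2 : Ordinal) = (2 : ℕ) by norm_num, opow_natCast, sq]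

theorem omega0_lt_omega0_opow_two : ω < ω ^ (2 : Ordinal) := by
  rw [omega0_opow_two]
  simp

theorem add_lt_omega0_opow_two {a b : Ordinal} (ha : a < ω ^ (2 : Ordinal))
    (hb : b < ω ^ (2 : Ordinal)) : a + b < ω ^ (2 : Ordinal) :=
  isPrincipal_add_omega0_opow 2 ha hb

theorem one_lt_omega0_opow_two : 1 < ω ^ (2 : Ordinal) :=
  one_lt_omega0.trans omega0_lt_omega0_opow_two

structure StrictlyIncreasesTo (u : ℕ → Ordinal) (l : Ordinal) : Prop where
  strictMono : StrictMono u
  lt : ∀ k, u k < l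
  exists_lt : ∀ γ < l, ∃ k, γ < u k

def natOrderIsoIioOmega0 : ℕ ≃o Iio ω :=
  StrictMono.orderIsoOfSurjective (fun n => ⟨n, natCast_lt_omega0 n⟩)
    (fun _ _ h => Subtype.mk_lt_mk.2 (Nat.cast_lt.2 h)) fun ⟨o, ho⟩ => by
      obtain ⟨n, rfl⟩ := lt_omega0.1 ho
      exact ⟨n, rfl⟩

namespace StrictlyIncreasesTo

variable {u : ℕ → Ordinal} {l : Ordinal}

theorem comp (h : StrictlyIncreasesTo u l) {φ : ℕ → ℕ} (hφ : StrictMono φ) :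
    StrictlyIncreasesTo (u ∘ φ) l where
  strictMono := h.strictMono.comp hφ
  lt k := h.lt (φ k)
  exists_lt γ hγ := by
    obtain ⟨k, hk⟩ := h.exists_lt γ hγ
    exact ⟨k, hk.trans_le (h.strictMono.monotone (hφ.id_le k))⟩

theorem isLUB_range (h : StrictlyIncreasesTo u l) : IsLUB (range u) l :=
  ⟨forall_mem_range.2 fun k => (h.lt k).le, fun b hb => not_lt.1 fun hbl => by
    obtain ⟨k, hk⟩ := h.exists_lt b hbl
    exact (hb ⟨k, rfl⟩).not_gt hk⟩

theorem csSup_range (h : StrictlyIncreasesTo u l) : sSup (range u) = l :=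
  h.isLUB_range.csSup_eq (range_nonempty u)

end StrictlyIncreasesTo

theorem strictlyIncreasesTo_omega0_mul :
    StrictlyIncreasesTo (fun k : ℕ => ω * k) (ω ^ (2 : Ordinal)) where
  strictMono _ _ h := (mul_lt_mul_iff_right₀ omega0_pos).2 (Nat.cast_lt.2 h)
  lt k := by
    rw [omega0_opow_two]
    exact (mul_lt_mul_iff_right₀ omega0_pos).2 (natCast_lt_omega0 k)
  exists_lt γ hγ := by
    rw [omega0_opow_two, lt_mul_iff_of_isSuccLimit isSuccLimit_omega0] at hγ
    obtain ⟨_, hn, hγn⟩ := hγ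
    obtain ⟨n, rfl⟩ := lt_omega0.1 hn
    exact ⟨n, hγn⟩

theorem strictlyIncreasesTo_add_natCast (γ : Ordinal) :
    StrictlyIncreasesTo (fun k : ℕ => γ + k) (γ + ω) where
  strictMono _ _ h := (add_lt_add_iff_left γ).2 (Nat.cast_lt.2 h)
  lt k := (add_lt_add_iff_left γ).2 (natCast_lt_omega0 k)
  exists_lt δ hδ := by
    obtain ⟨_, hn, hδn⟩ := (lt_add_iff_of_isSuccLimit isSuccLimit_omega0).1 hδ
    obtain ⟨n, rfl⟩ := lt_omega0.1 hn
    exact ⟨n, hδn⟩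

theorem StrictlyIncreasesTo.exists_of_cofinal {s : ℕ → Ordinal} {l : Ordinal}
    (hs : StrictlyIncreasesTo s l) {Z : Set Ordinal} (hZ : ∀ γ < l, ∃ z ∈ Z, γ < z ∧ z < l) :
    ∃ u, StrictlyIncreasesTo u l ∧ ∀ k, u k ∈ Z := by
  -- `w` is cofinal since it dominates `s`; so a non-increasing subsequence of it is impossible
  choose w hwZ hsw hwl using fun k => hZ (s k) (hs.lt k)
  obtain ⟨g, hinc | hnot⟩ := exists_increasing_or_nonincreasing_subseq (· < ·) w
  all_goals have hswg : ∀ k, s k < w (g k) := fun k =>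
    (hs.strictMono.monotone (g.strictMono.id_le k)).trans_lt (hsw _)
  · refine ⟨w ∘ g, ⟨hinc, fun k => hwl _, fun γ hγ => ?_⟩, fun k => hwZ _⟩
    obtain ⟨k, hk⟩ := hs.exists_lt γ hγ
    exact ⟨k, hk.trans (hswg k)⟩
  · obtain ⟨k, hk⟩ := hs.exists_lt _ (hwl (g 0))
    rcases k.eq_zero_or_pos with rfl | hk0
    · exact absurd (hk.trans (hswg 0)) (lt_irrefl _)
    · exact (hnot 0 k hk0 (hk.trans (hswg k))).elim

theorem IsOrderCopy.insert_of_forall_lt {X : Set Ordinal} {α t : Ordinal} (hX : IsOrderCopy X α)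
    (ht : ∀ x ∈ X, x < t) : IsOrderCopy (insert t X) (α + 1) := by
  obtain ⟨e⟩ := hX
  let f : Ordinal → Ordinal := fun o => if h : o < α then e.symm ⟨o, h⟩ else t
  have hf : StrictMonoOn f (Iio (α + 1)) := by
    intro o _ o' (ho' : o' < α + 1) hoo'
    have hoα : o < α := hoo'.trans_le (Order.lt_add_one_iff.1 ho')
    rcases (Order.lt_add_one_iff.1 ho').lt_or_eq with ho'α | rfl
    · simpa [f, hoα, ho'α] using
        e.symm.strictMono (show (⟨o, hoα⟩ : Iio α) < ⟨o', ho'α⟩ from hoo')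
    · simpa [f, hoα] using ht _ (e.symm ⟨o, hoα⟩).2
  have himage : f '' Iio (α + 1) = insert t X := by
    ext y
    constructor
    · rintro ⟨o, -, rfl⟩
      by_cases ho : o < α <;> simp [f, ho]
    · rintro (rfl | hy)
      · exact ⟨α, show α < α + 1 from lt_add_one α, by simp [f]⟩
      · refine ⟨e ⟨y, hy⟩, show _ < α + 1 from (e ⟨y, hy⟩).2.trans (lt_add_one α), ?_⟩
        have hα : (e ⟨y, hy⟩ : Ordinal) < α := (e ⟨y, hy⟩).2
        simp only [f, dif_pos hα]
        exact congrArg Subtype.val (e.symm_apply_apply ⟨y, hy⟩)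
  exact ⟨((hf.orderIso f _).trans (OrderIso.setCongr _ _ himage)).symm⟩

namespace IsClosedCopy

variable {X : Set Ordinal} {α : Ordinal}

theorem insert_of_forall_lt {t : Ordinal} (hX : IsClosedCopy X α) (ht : ∀ x ∈ X, x < t)
    (hsup : sSup X ∈ X ∨ sSup X = t) : IsClosedCopy (insert t X) (α + 1) := by
  refine ⟨hX.1.insert_of_forall_lt ht, fun S hS hSne hSt => ?_⟩
  have htop : IsGreatest (insert t X) t :=
    ⟨mem_insert t X, forall_mem_insert.2 ⟨le_rfl, fun x hx => (ht x hx).le⟩⟩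
  rw [htop.csSup_eq] at hSt
  have hSX : S ⊆ X := fun s hs => (hS hs).resolve_left fun hst =>
    (le_csSup (htop.bddAbove.mono hS) (hst ▸ hs)).not_gt hSt
  rcases (csSup_le_csSup (htop.bddAbove.mono (subset_insert t X)) hSne hSX).lt_or_eq
    with hlt | heq
  · exact subset_insert t X (hX.2 S hSX hSne hlt)
  · rw [heq]
    exact subset_insert t X (hsup.resolve_right (heq ▸ hSt).ne)

theorem image_add (hX : IsClosedCopy X α) (hbdd : BddAbove X) (β : Ordinal) :
    IsClosedCopy ((β + ·) '' X) α := by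
  have hmono : StrictMono (β + ·) := fun _ _ h => (add_lt_add_iff_left β).2 h
  obtain ⟨e⟩ := hX.1
  refine ⟨⟨((hmono.strictMonoOn X).orderIso _ X).symm.trans e⟩, fun S' hS' hS'ne hlt => ?_⟩
  obtain ⟨S, hSX, rfl⟩ := subset_image_iff.1 hS'
  have hSne : S.Nonempty := hS'ne.of_image
  rw [← (isNormal_add_right β).map_sSup hSne (hbdd.mono hSX),
    ← (isNormal_add_right β).map_sSup (hSne.mono hSX) hbdd] at hlt
  rw [← (isNormal_add_right β).map_sSup hSne (hbdd.mono hSX)]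
  exact mem_image_of_mem _ (hX.2 S hSX hSne ((add_lt_add_iff_left β).1 hlt))

end IsClosedCopy

namespace StrictlyIncreasesTo

variable {u : ℕ → Ordinal} {l : Ordinal}

theorem isClosedCopy_range (h : StrictlyIncreasesTo u l) : IsClosedCopy (range u) ω := by
  refine ⟨⟨(h.strictMono.orderIso u).symm.trans natOrderIsoIioOmega0⟩,
    fun S hS hSne hSl => ?_⟩
  rw [h.csSup_range] at hSl
  obtain ⟨k, hk⟩ := h.exists_lt _ hSl
  have hfin : S.Finite := ((finite_Iio k).image u).subset fun s hs => by
    obtain ⟨i, rfl⟩ := hS hs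
    exact mem_image_of_mem u (h.strictMono.lt_iff_lt.1
      ((le_csSup (h.isLUB_range.bddAbove.mono hS) hs).trans_lt hk))
  exact hS (hSne.csSup_mem hfin)

theorem isClosedCopy_insert (h : StrictlyIncreasesTo u l) :
    IsClosedCopy (insert l (range u)) (ω + 1) :=
  h.isClosedCopy_range.insert_of_forall_lt (forall_mem_range.2 h.lt) (Or.inr h.csSup_range)

theorem isClosedCopy_insert_insert (h : StrictlyIncreasesTo u l) {t : Ordinal} (hlt : l < t) :
    IsClosedCopy (insert t (insert l (range u))) (ω + 2) := by
  have hω : (ω : Ordinal) + 2 = ω + 1 + 1 := by rw [add_assoc, one_add_one_eq_two]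
  rw [hω]
  refine h.isClosedCopy_insert.insert_of_forall_lt
    (forall_mem_insert.2 ⟨hlt, forall_mem_range.2 fun k => (h.lt k).trans hlt⟩) (Or.inl ?_)
  have htop : IsGreatest (insert l (range u)) l :=
    ⟨mem_insert l _, forall_mem_insert.2 ⟨le_rfl, h.isLUB_range.1⟩⟩
  rw [htop.csSup_eq]
  exact htop.1

end StrictlyIncreasesTo

theorem exists_isClosedCopy_omega0_add_one_subset_Icc (γ : Ordinal.{v}) :
    ∃ X, IsClosedCopy.{v, w} X (ω + 1) ∧ X ⊆ Icc γ (γ + ω) :=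
  have h := strictlyIncreasesTo_add_natCast γ
  ⟨_, h.isClosedCopy_insert, insert_subset_iff.2 ⟨⟨le_self_add, le_rfl⟩,
    range_subset_iff.2 fun k => ⟨le_self_add, (h.lt k).le⟩⟩⟩

theorem exists_isClosedCopy_omega0_add_two_subset_Icc (γ : Ordinal.{v}) :
    ∃ X, IsClosedCopy.{v, w} X (ω + 2) ∧ X ⊆ Icc γ (γ + ω + 1) :=
  have h := strictlyIncreasesTo_add_natCast γ
  have hω : γ + ω < γ + ω + 1 := lt_add_one _
  ⟨_, h.isClosedCopy_insert_insert hω, insert_subset_iff.2 ⟨⟨le_self_add.trans hω.le, le_rfl⟩,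
    insert_subset_iff.2 ⟨⟨le_self_add, hω.le⟩,
      range_subset_iff.2 fun k => ⟨le_self_add, ((h.lt k).trans hω).le⟩⟩⟩⟩

theorem IsClosedCopy.exists_strictlyIncreasesTo {Y : Set Ordinal} (hY : IsClosedCopy Y (ω + 1)) :
    ∃ u l, StrictlyIncreasesTo u l ∧ Y = insert l (range u) := by
  obtain ⟨⟨e⟩, hcl⟩ := hY
  have hlt : ∀ {o : Ordinal}, o < ω → o < ω + 1 := fun h => h.trans (lt_add_one ω)
  let u : ℕ → Ordinal := fun k => e.symm ⟨k, hlt (natCast_lt_omega0 k)⟩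
  let l : Ordinal := e.symm ⟨ω, lt_add_one ω⟩
  have hu : StrictMono u := fun i j hij =>
    e.symm.strictMono (Subtype.mk_lt_mk.2 (Nat.cast_lt.2 hij))
  have hul : ∀ k, u k < l := fun k =>
    e.symm.strictMono (Subtype.mk_lt_mk.2 (natCast_lt_omega0 k))
  have hY : Y = insert l (range u) := by
    ext y
    constructor
    · intro hy
      have hω1 : (e ⟨y, hy⟩ : Ordinal) < ω + 1 := (e ⟨y, hy⟩).2
      rcases (Order.lt_add_one_iff.1 hω1).lt_or_eq with hω | hω
      · obtain ⟨n, hn⟩ := lt_omega0.1 hω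
        have hn' : (⟨n, hlt (natCast_lt_omega0 n)⟩ : Iio (ω + 1)) = e ⟨y, hy⟩ :=
          Subtype.ext hn.symm
        exact Or.inr ⟨n, by simp only [u, hn', OrderIso.symm_apply_apply]⟩
      · have hω' : (⟨ω, lt_add_one ω⟩ : Iio (ω + 1)) = e ⟨y, hy⟩ := Subtype.ext hω.symm
        exact Or.inl (by simp only [l, hω', OrderIso.symm_apply_apply])
    · rintro (rfl | ⟨k, rfl⟩) <;> exact Subtype.prop _
  rw [hY] at hcl
  have htop : IsGreatest (insert l (range u)) l :=
    ⟨mem_insert l _, forall_mem_insert.2 ⟨le_rfl, forall_mem_range.2 fun k => (hul k).le⟩⟩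
  refine ⟨u, l, ⟨hu, hul, fun γ hγ => ?_⟩, hY⟩
  -- closedness puts `sSup (range u) ≤ γ < l` into `Y`, though `Y ∩ [sSup (range u), l) = ∅`
  by_contra! hγu
  have hsup : sSup (range u) < sSup (insert l (range u)) := by
    rw [htop.csSup_eq]
    exact (csSup_le (range_nonempty u) (forall_mem_range.2 hγu)).trans_lt hγ
  rcases hcl (range u) (subset_insert l _) (range_nonempty u) hsup with heq | ⟨k, hk⟩
  · exact hsup.ne (heq.trans htop.csSup_eq.symm)
  · exact (hu k.lt_succ_self).not_ge
      (hk ▸ le_csSup ⟨γ, forall_mem_range.2 hγu⟩ (mem_range_self _))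

theorem BlueSet.mono {c : Ordinal → Ordinal → Bool} {β β' : Ordinal} {m : ℕ}
    (h : BlueSet c β m) (hββ' : β ≤ β') : BlueSet c β' m :=
  let ⟨H, hHβ, hcard, hH⟩ := h
  ⟨H, fun _ hx => (hHβ hx).trans_le hββ', hcard, hH⟩

theorem blueSet_three_of_triangle {c : Ordinal → Ordinal → Bool} {β x y z : Ordinal}
    (hxy : x < y) (hyz : y < z) (hzβ : z < β)
    (hcxy : c x y = false) (hcxz : c x z = false) (hcyz : c y z = false) : BlueSet c β 3 := by
  refine ⟨{x, y, z}, ?_,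
    Finset.card_eq_three.2 ⟨x, y, z, hxy.ne, (hxy.trans hyz).ne, hyz.ne, rfl⟩, ?_⟩
  · simp [insert_subset_iff, hzβ, hyz.trans hzβ, (hxy.trans hyz).trans hzβ]
  · intro a ha b hb hab
    simp only [Finset.coe_insert, Finset.coe_singleton, mem_insert_iff, mem_singleton_iff] at ha hb
    rcases ha with rfl | rfl | rfl <;> rcases hb with rfl | rfl | rfl <;>
      first | assumption | (exfalso; order)

namespace Homog

variable {c : Ordinal → Ordinal → Bool} {b : Bool} {X Y : Set Ordinal}

theorem mono (h : Homog c b X) (hYX : Y ⊆ X) : Homog c b Y :=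
  fun x hx y hy => h x (hYX hx) y (hYX hy)

theorem insert_of_forall_lt {t : Ordinal} (h : Homog c b X)
    (ht : ∀ x ∈ X, x < t ∧ c x t = b) : Homog c b (insert t X) := by
  rintro x (rfl | hx) y (rfl | hy) hxy
  · exact absurd hxy (lt_irrefl _)
  · exact absurd hxy (ht y hy).1.not_gt
  · exact (ht x hx).2
  · exact h x hx y hy hxy

end Homog

theorem homog_range {c : Ordinal → Ordinal → Bool} {b : Bool} {u : ℕ → Ordinal}
    (hu : StrictMono u) (h : ∀ i j, i < j → c (u i) (u j) = b) : Homog c b (range u) := by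
  rintro _ ⟨i, rfl⟩ _ ⟨j, rfl⟩ hij
  exact h i j (hu.lt_iff_lt.1 hij)

theorem exists_strictMono_forall_eq_true {f : ℕ → ℕ → Bool}
    (hf : ∀ i j k, i < j → j < k → f i j = false → f i k = false → f j k = true) :
    ∃ φ : ℕ → ℕ, StrictMono φ ∧ ∀ i j, i < j → f (φ i) (φ j) = true := by
  by_cases hinf : ∃ i, {j | i < j ∧ f i j = false}.Infinite
  · -- with no blue triangle, an infinite blue neighbourhood is a red clique
    obtain ⟨i, hi⟩ := hinf
    refine ⟨Nat.nth (· ∈ {j | i < j ∧ f i j = false}), Nat.nth_strictMono hi, fun m n hmn => ?_⟩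
    have hm := Nat.nth_mem_of_infinite hi m
    have hn := Nat.nth_mem_of_infinite hi n
    exact hf _ _ _ hm.1 (Nat.nth_strictMono hi hmn) hm.2 hn.2
  · -- all blue neighbourhoods are finite, so a red clique can be chosen greedily
    simp only [not_exists, not_infinite] at hinf
    obtain ⟨φ, -, hφ⟩ := exists_seq_of_forall_finset_exists (fun _ => True)
      (fun i j => i < j ∧ f i j = true) fun s _ => by
        obtain ⟨j, hj⟩ :=
          ((s.finite_toSet.biUnion fun i _ => hinf i).union (finite_Iic (s.sup id))).exists_notMem
        simp only [mem_union, mem_iUnion, mem_ofPred_eq, mem_Iic, not_or, not_exists,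
          not_and, not_le] at hj
        refine ⟨j, trivial, fun i hi => ?_⟩
        have hij : i < j := (Finset.le_sup (f := id) hi).trans_lt hj.2
        exact ⟨hij, by simpa [hij] using hj.1 i hi⟩
    exact ⟨φ, fun m n h => (hφ m n h).1, fun m n h => (hφ m n h).2⟩

theorem toClosed2_omega0_sq_add_one : ToClosed2.{v, w} (ω ^ (2 : Ordinal) + 1) (ω + 1) 3 := by
  intro c
  rw [or_iff_not_imp_right]
  intro hblue
  set W : Ordinal := ω ^ (2 : Ordinal)
  have hle : ∀ {z}, z ≤ W → z < W + 1 := Order.lt_add_one_iff.2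
  by_cases hcof : ∀ γ < W, ∃ z ∈ {z | c z W = true}, γ < z ∧ z < W
  · obtain ⟨s, hs, hsW⟩ := strictlyIncreasesTo_omega0_mul.exists_of_cofinal hcof
    obtain ⟨φ, hφ, hred⟩ := exists_strictMono_forall_eq_true (f := fun i j => c (s i) (s j))
      fun i j k hij hjk hcij hcik => by
        by_contra hcjk
        exact hblue (blueSet_three_of_triangle (hs.strictMono hij) (hs.strictMono hjk)
          (hle (hs.lt k).le) hcij hcik (by simpa using hcjk))
    have hsφ := hs.comp hφ
    refine ⟨insert W (range (s ∘ φ)), ?_, hsφ.isClosedCopy_insert,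
      (homog_range hsφ.strictMono hred).insert_of_forall_lt
        (forall_mem_range.2 fun k => ⟨hsφ.lt k, hsW _⟩)⟩
    exact insert_subset_iff.2 ⟨hle le_rfl, range_subset_iff.2 fun k => hle (hsφ.lt k).le⟩
  · push Not at hcof
    obtain ⟨γ, hγW, hγ⟩ := hcof
    have hblueW : ∀ z, γ < z → z < W → c z W = false := fun z h1 h2 => by
      by_contra h
      exact (hγ z (by simpa using h) h1).not_gt h2
    obtain ⟨X, hX, hXγ⟩ := exists_isClosedCopy_omega0_add_one_subset_Icc.{v, w} (γ + 1)
    have hend : γ + 1 + ω < W := add_lt_omega0_opow_two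
      (add_lt_omega0_opow_two hγW one_lt_omega0_opow_two) omega0_lt_omega0_opow_two
    have hXW : ∀ z ∈ X, γ < z ∧ z < W := fun z hz =>
      ⟨(lt_add_one γ).trans_le (hXγ hz).1, (hXγ hz).2.trans_lt hend⟩
    refine ⟨X, fun z hz => hle (hXW z hz).2.le, hX, fun z hz z' hz' hzz' => ?_⟩
    by_contra h
    exact hblue (blueSet_three_of_triangle hzz' (hXW z' hz').2 (hle le_rfl) (by simpa using h)
      (hblueW z (hXW z hz).1 (hXW z hz).2) (hblueW z' (hXW z' hz').1 (hXW z' hz').2))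

theorem exists_isClosedCopy_of_forall_Icc {k : ℕ} (d : Ordinal.{v} → Fin k) {β γ : Ordinal}
    (hβ : γ + ω + 1 < β) (hd : ∀ z ∈ Icc γ (γ + ω + 1), d z = d γ) :
    ∃ i, ∃ X ⊆ Iio β, (∀ x ∈ X, d x = i) ∧ IsClosedCopy.{v, w} X (ω + 2) :=
  have ⟨X, hX, hXγ⟩ := exists_isClosedCopy_omega0_add_two_subset_Icc.{v, w} γ
  ⟨d γ, X, fun _ hz => (hXγ hz).2.trans_lt hβ, fun z hz => hd z (hXγ hz), hX⟩

theorem toClosed1_omega0_sq_add_omega0_add_two :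
    ToClosed1.{v, w} (ω ^ (2 : Ordinal) + ω + 2) (ω + 2) 2 := by
  intro d
  set W : Ordinal := ω ^ (2 : Ordinal)
  have hother : ∀ {x y}, d x ≠ d W → d y ≠ d W → d x = d y := by
    intro x y
    generalize d x = a
    generalize d y = b
    generalize d W = e
    revert a b e
    decide
  by_cases hcof : ∀ γ < W, ∃ z ∈ {z | d z = d W}, γ < z ∧ z < W
  · by_cases htop : ∃ t, W < t ∧ t < W + ω + 2 ∧ d t = d W
    · obtain ⟨t, hWt, htβ, hdt⟩ := htop
      obtain ⟨s, hs, hsd⟩ := strictlyIncreasesTo_omega0_mul.exists_of_cofinal hcof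
      refine ⟨d W, insert t (insert W (range s)), ?_, ?_, hs.isClosedCopy_insert_insert hWt⟩
      · exact insert_subset_iff.2 ⟨htβ, insert_subset_iff.2 ⟨hWt.trans htβ,
          range_subset_iff.2 fun k => ((hs.lt k).trans hWt).trans htβ⟩⟩
      · exact forall_mem_insert.2 ⟨hdt, forall_mem_insert.2 ⟨rfl, forall_mem_range.2 hsd⟩⟩
    · push Not at htop
      have hW1 : W < W + 1 := lt_add_one W
      have hend : W + 1 + ω + 1 = W + ω + 1 := by
        rw [add_assoc W 1 ω, one_add_of_omega0_le le_rfl]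
      have hβ : W + 1 + ω + 1 < W + ω + 2 := by
        rw [hend]
        exact (add_lt_add_iff_left (W + ω)).2 one_lt_two
      refine exists_isClosedCopy_of_forall_Icc d hβ fun z hz => hother ?_ ?_
      · exact htop z (hW1.trans_le hz.1) (hz.2.trans_lt hβ)
      · exact htop (W + 1) hW1 ((le_self_add.trans le_self_add).trans_lt hβ)
  · push Not at hcof
    obtain ⟨γ, hγW, hγ⟩ := hcof
    have hne : ∀ z, γ < z → z < W → d z ≠ d W := fun z h1 h2 hz => (hγ z hz h1).not_gt h2
    have hγ1 : γ < γ + 1 := lt_add_one γ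
    have hend : γ + 1 + ω + 1 < W := add_lt_omega0_opow_two
      (add_lt_omega0_opow_two (add_lt_omega0_opow_two hγW one_lt_omega0_opow_two)
        omega0_lt_omega0_opow_two) one_lt_omega0_opow_two
    have hWβ : W ≤ W + ω + 2 := le_self_add.trans le_self_add
    refine exists_isClosedCopy_of_forall_Icc d (hend.trans_le hWβ) fun z hz => hother
      (hne z (hγ1.trans_le hz.1) (hz.2.trans_lt hend))
      (hne (γ + 1) hγ1 ((le_self_add.trans le_self_add).trans_lt hend))

theorem exists_homog_isClosedCopy_of_infinite {c : Ordinal → Ordinal → Bool} {u : ℕ → Ordinal}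
    {l z : Ordinal} (hul : StrictlyIncreasesTo u l) (hred : Homog c true (insert l (range u)))
    (hlz : l < z) (hclz : c l z = true) (hinf : {k | c (u k) z = true}.Infinite) :
    ∃ X ⊆ Iic z, IsClosedCopy.{v, w} X (ω + 2) ∧ Homog c true X := by
  have hφ := hul.comp (Nat.nth_strictMono hinf)
  have hbelow : ∀ x ∈ insert l (range (u ∘ Nat.nth (· ∈ {k | c (u k) z = true}))),
      x < z ∧ c x z = true :=
    forall_mem_insert.2 ⟨⟨hlz, hclz⟩, forall_mem_range.2 fun k =>
      ⟨(hφ.lt k).trans hlz, Nat.nth_mem_of_infinite hinf k⟩⟩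
  exact ⟨_, insert_subset_iff.2 ⟨mem_Iic.2 le_rfl, fun x hx => (hbelow x hx).1.le⟩,
    hφ.isClosedCopy_insert_insert hlz,
    (hred.mono (insert_subset_insert (range_comp_subset_range _ _))).insert_of_forall_lt hbelow⟩

theorem ToClosed2.add_of_toClosed1 {β₁ β₂ : Ordinal.{v}} (h₁ : ToClosed2.{v, w} β₁ (ω + 1) 3)
    (h₂ : ToClosed1.{v, w} β₂ (ω + 2) 2) : ToClosed2.{v, w} (β₁ + β₂) (ω + 2) 3 := by
  intro c
  rw [or_iff_not_imp_right]
  intro hblue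
  by_contra hred
  obtain ⟨Y, hYβ, hY, hYred⟩ := (h₁ c).resolve_right fun h => hblue (h.mono le_self_add)
  obtain ⟨u, l, hul, rfl⟩ := hY.exists_strictlyIncreasesTo
  have hlβ : l < β₁ := hYβ (mem_insert l _)
  have hfin : ∀ z, β₁ ≤ z → z < β₁ + β₂ → c l z = true → {k | c (u k) z = true}.Finite :=
    fun z hz hzβ hclz => not_infinite.1 fun hinf => by
      obtain ⟨X, hXz, hX, hXred⟩ :=
        exists_homog_isClosedCopy_of_infinite hul hYred (hlβ.trans_le hz) hclz hinf
      exact hred ⟨X, fun x hx => (hXz hx).trans_lt hzβ, hX, hXred⟩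
  obtain ⟨i, X, hXβ, hXd, hX⟩ := h₂ (finTwoEquiv.symm ∘ fun z => c l (β₁ + z))
  have hsame : ∀ x ∈ X, ∀ y ∈ X, c l (β₁ + x) = c l (β₁ + y) := fun x hx y hy =>
    finTwoEquiv.symm.injective ((hXd x hx).trans (hXd y hy).symm)
  refine hred ⟨(β₁ + ·) '' X, ?_, hX.image_add ⟨β₂, fun x hx => (hXβ hx).le⟩ β₁, ?_⟩
  · rintro _ ⟨x, hx, rfl⟩
    exact (add_lt_add_iff_left β₁).2 (hXβ hx)
  rintro _ ⟨x, hx, rfl⟩ _ ⟨y, hy, rfl⟩ hxy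
  have hyβ : β₁ + y < β₁ + β₂ := (add_lt_add_iff_left β₁).2 (hXβ hy)
  by_contra hxy'
  rw [Bool.not_eq_true] at hxy'
  cases hlx : c l (β₁ + x)
  · exact hblue (blueSet_three_of_triangle (hlβ.trans_le le_self_add) hxy hyβ hlx
      (hsame x hx y hy ▸ hlx) hxy')
  · -- both points are red to `l`, so some `u k` is blue to both
    obtain ⟨k, hk⟩ := ((hfin _ le_self_add (hxy.trans hyβ) hlx).union
      (hfin _ le_self_add hyβ (hsame x hx y hy ▸ hlx))).infinite_compl.nonempty
    simp only [mem_compl_iff, mem_union, mem_ofPred_eq, not_or, Bool.not_eq_true] at hk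
    exact hblue (blueSet_three_of_triangle ((hul.lt k).trans (hlβ.trans_le le_self_add)) hxy hyβ
      hk.1 hk.2 hxy')

/-- `ω²·2 + ω + 2 →_cl (ω+2, 3)²`,
i.e. `R^cl(ω+2,3) ≤ R^cl(ω+1,3) + P^cl(ω+2)₂ = ω²·2+ω+2`. -/
theorem stmt8 :
    ToClosed2 ((ω : Ordinal) ^ (2 : Ordinal) * 2 + ω + 2) (ω + 2) 3 := by
  have hsum : ω ^ (2 : Ordinal) + 1 + (ω ^ (2 : Ordinal) + ω + 2) =
      ω ^ (2 : Ordinal) * 2 + ω + 2 := by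
    rw [add_assoc _ 1, ← add_assoc 1, ← add_assoc 1,
      one_add_of_omega0_le omega0_lt_omega0_opow_two.le, ← add_assoc, ← add_assoc,
      ← one_add_one_eq_two, mul_add, mul_one]
  exact hsum ▸ toClosed2_omega0_sq_add_one.add_of_toClosed1 toClosed1_omega0_sq_add_omega0_add_two
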